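/- There exists an absolute constant A₁ > 0 such that for every injective map τ : D → D, the scalar rearrangement operator on dyadic H¹ satisfies ‖T_{τ,1}‖₁² ≤ A₁ · C₁. -/

import Mathlib

open MeasureTheory Set
open scoped ENNReal NNReal Classical

noncomputable section

/-- A dyadic subinterval of `[0,1)`: the half-open interval
`[k/2^n, (k+1)/2^n)` with `k < 2^n`. -/
structure DyadicI where
  n : ℕ
  k : ℕ
  hk : k < 2 ^ n

instance : Nonempty DyadicI := ⟨⟨0, 0, by norm_num⟩⟩

namespace DyadicI

/-- The length `|I| = 2^{-n}` of a dyadic interval. -/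
def len (I : DyadicI) : ℝ := (2 : ℝ) ^ (-(I.n : ℤ))

/-- The left endpoint `k 2^{-n}` of a dyadic interval. -/
def lep (I : DyadicI) : ℝ := (I.k : ℝ) * I.len

/-- The underlying point set `[k/2^n, (k+1)/2^n)` of a dyadic interval. -/
def toSet (I : DyadicI) : Set ℝ := Set.Ico I.lep (I.lep + I.len)

/-- The `L^∞`-normalized Haar function `h_I`: `1` on the left half of `I`,
`-1` on the right half of `I`, `0` off `I`. -/
def haar (I : DyadicI) (t : ℝ) : ℝ :=
  if t ∈ Set.Ico I.lep (I.lep + I.len / 2) then 1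
  else if t ∈ Set.Ico (I.lep + I.len / 2) (I.lep + I.len) then -1
  else 0

end DyadicI

open DyadicI

section Defs

variable {X : Type*} [NormedAddCommGroup X] [NormedSpace ℝ X]

/-- The square function `𝕊(f)` of the `X`-valued Haar expansion `f = ∑_{I ∈ s} x_I h_I`:
`𝕊(f)(t) = (E_ε ‖∑_I ε_I x_I h_I(t)‖²)^{1/2}`, the average being taken over all
choices of signs `ε_I ∈ {±1}`, `I ∈ s`. -/
def sqFn (s : Finset DyadicI) (x : DyadicI → X) (t : ℝ) : ℝ :=
  Real.sqrt ((∑ ε : {I // I ∈ s} → Bool,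
    ‖∑ I ∈ s.attach, ((if ε I then (1 : ℝ) else -1) * haar I.1 t) • x I.1‖ ^ 2) /
      2 ^ s.card)

/-- The `H^p_X` (quasi-)norm of `f = ∑_{I ∈ s} x_I h_I`:
`‖f‖ = (∫₀¹ 𝕊(f)(t)^p dt)^{1/p}`. -/
def HpNormV (p : ℝ) (s : Finset DyadicI) (x : DyadicI → X) : ℝ :=
  (∫ t in Set.Icc (0 : ℝ) 1, sqFn s x t ^ p) ^ (1 / p)

/-- The coefficients of `(T_{τ,p} ⊗ Id_X)(f)` for `f = ∑_{I ∈ s} x_I h_I`, namely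
`(T_{τ,p} ⊗ Id_X)(f) = ∑_{I ∈ s} (|I|/|τ(I)|)^{1/p} x_I h_{τ(I)}`, as a family of
coefficients indexed by the Haar support `τ(s)`. -/
def rearrCoef (τ : DyadicI → DyadicI) (p : ℝ) (s : Finset DyadicI) (x : DyadicI → X) :
    DyadicI → X :=
  fun J => ∑ I ∈ s, if τ I = J then ((len I / len (τ I)) ^ (1 / p)) • x I else 0

/-- The scalar dyadic square function `S(f) = (∑_I a_I² 1_I)^{1/2}`
of `f = ∑_{I ∈ s} a_I h_I`. -/
def sqFnS (s : Finset DyadicI) (a : DyadicI → ℝ) (t : ℝ) : ℝ :=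
  Real.sqrt (∑ I ∈ s, a I ^ 2 * Set.indicator (toSet I) (fun _ => (1 : ℝ)) t)

/-- The scalar dyadic `H^p` (quasi-)norm `‖f‖_{H^p} = ‖S(f)‖_{L^p[0,1]}`. -/
def HpNormS (p : ℝ) (s : Finset DyadicI) (a : DyadicI → ℝ) : ℝ :=
  (∫ t in Set.Icc (0 : ℝ) 1, sqFnS s a t ^ p) ^ (1 / p)

/-- The coefficients of the scalar rearrangement operator `T_{τ,p}` applied to
`f = ∑_{I ∈ s} a_I h_I`; `T_{τ,p}` is determined by
`T_{τ,p}(h_I/|I|^{1/p}) = h_{τ(I)}/|τ(I)|^{1/p}`. -/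
def rearrCoefS (τ : DyadicI → DyadicI) (p : ℝ) (s : Finset DyadicI) (a : DyadicI → ℝ) :
    DyadicI → ℝ :=
  fun J => ∑ I ∈ s, if τ I = J then ((len I / len (τ I)) ^ (1 / p)) * a I else 0

/-- The operator norm `‖T_{τ,p} ⊗ Id_X : H^p_X → H^p_X‖ ∈ [0,∞]`, computed as the
supremum over finitely supported `f` in the unit ball of `H^p_X`. -/
def hpOpNorm (τ : DyadicI → DyadicI) (p : ℝ) (X : Type*) [NormedAddCommGroup X]
    [NormedSpace ℝ X] : ℝ≥0∞ :=
  ⨆ (s : Finset DyadicI) (x : DyadicI → X) (_ : HpNormV p s x ≤ 1),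
    ENNReal.ofReal (HpNormV p (s.image τ) (rearrCoef τ p s x))

/-- The scalar operator norm `‖T_{τ,p} : H^p → H^p‖ ∈ [0,∞]`. -/
def hpOpNormS (τ : DyadicI → DyadicI) (p : ℝ) : ℝ≥0∞ :=
  ⨆ (s : Finset DyadicI) (a : DyadicI → ℝ) (_ : HpNormS p s a ≤ 1),
    ENNReal.ofReal (HpNormS p (s.image τ) (rearrCoefS τ p s a))

/-- For `H = τ(L)` (so that `σ(J) = I` for `J = τ(I)`, `I ∈ L`), the maximal function
`μ_H(t) = sup_{J ∈ H} (|σ(J)|/|J|) 1_J(t) = sup_{I ∈ L} (|I|/|τ(I)|) 1_{τ(I)}(t)`,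
as an `[0,∞]`-valued function. -/
def muSet (τ : DyadicI → DyadicI) (L : Set DyadicI) (t : ℝ) : ℝ≥0∞ :=
  ⨆ (I : DyadicI) (_ : I ∈ L),
    ENNReal.ofReal (len I / len (τ I) * Set.indicator (toSet (τ I)) (fun _ => (1 : ℝ)) t)

/-- For `H = τ(L)` with `L` finite, the (real-valued) maximal function
`μ_H(t) = max_{I ∈ L} (|I|/|τ(I)|) 1_{τ(I)}(t)`. -/
def muFin (τ : DyadicI → DyadicI) (L : Finset DyadicI) (t : ℝ) : ℝ :=
  ((L.sup fun I =>
    Real.toNNReal (len I / len (τ I) * Set.indicator (toSet (τ I)) (fun _ => (1 : ℝ)) t) : ℝ≥0) : ℝ)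

/-- The point set `L* = ⋃_{I ∈ L} I` covered by a collection of dyadic intervals. -/
def pointSet (L : Set DyadicI) : Set ℝ := ⋃ I ∈ L, toSet I

/-- The constant `C₁ = sup_{H ⊆ τ(D), H ≠ ∅} (1/|σ(H)*|) ∫₀¹ μ_H(t) dt`, where
nonempty collections `H ⊆ τ(D)` are parametrized as `H = τ(L)` for nonempty `L ⊆ D`,
so that `σ(H)* = L*`. -/
def Cone (τ : DyadicI → DyadicI) : ℝ≥0∞ :=
  ⨆ (L : Set DyadicI) (_ : L.Nonempty),
    (∫⁻ t in Set.Icc (0 : ℝ) 1, muSet τ L t) / volume (pointSet L)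

/-- The square of the dyadic BMO norm of `g = ∑_{J ∈ s} a_J h_J`:
`‖g‖_{BMO}² = sup_{I ∈ D} (1/|I|) ∑_{J ⊆ I} a_J² |J|`. -/
def bmoSq (s : Finset DyadicI) (a : DyadicI → ℝ) : ℝ≥0∞ :=
  ⨆ I : DyadicI, ENNReal.ofReal
    ((∑ J ∈ s.filter fun J => toSet J ⊆ toSet I, a J ^ 2 * len J) / len I)

/-- The coefficients of `S_σ(g)` for `g = ∑_{J ∈ s} a_J h_J`, where `σ = τ⁻¹` on `τ(D)`:
`S_σ(h_J) = h_{σ(J)}` for `J ∈ τ(D)` and `S_σ(h_J) = 0` otherwise, so that the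
coefficient of `h_K` in `S_σ(g)` is `a_{τ(K)}` if `τ(K) ∈ s`, and `0` otherwise. -/
def sSigmaCoef (τ : DyadicI → DyadicI) (s : Finset DyadicI) (a : DyadicI → ℝ) :
    DyadicI → ℝ :=
  fun K => if τ K ∈ s then a (τ K) else 0

/-- The Haar support of `S_σ(g)` for `g` with Haar support `s`:
`σ(s ∩ τ(D))`, i.e. the preimage under `τ` of `s`. -/
def sSigmaSupp (τ : DyadicI → DyadicI) (s : Finset DyadicI) : Finset DyadicI :=
  (s.filter fun J => J ∈ Set.range τ).image (Function.invFun τ)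

/-- The operator norm `‖S_σ‖_{BMO} ∈ [0,∞]` of `S_σ` with respect to the dyadic BMO
norm, computed over finitely supported Haar expansions. -/
def bmoOpNorm (τ : DyadicI → DyadicI) : ℝ≥0∞ :=
  ⨆ (s : Finset DyadicI) (a : DyadicI → ℝ) (_ : bmoSq s a ≤ 1),
    (bmoSq (sSigmaSupp τ s) (sSigmaCoef τ s a)) ^ (1 / 2 : ℝ)

/-- The Carleson constant `⟦C⟧ = sup_{I ∈ C} (1/|I|) ∑_{J ∈ C, J ⊆ I} |J| ∈ [0,∞]`
of a collection of dyadic intervals. -/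
def carleson (C : Set DyadicI) : ℝ≥0∞ :=
  ⨆ (I : DyadicI) (_ : I ∈ C),
    (∑' J : {J : DyadicI // J ∈ C ∧ toSet J ⊆ toSet I}, ENNReal.ofReal (len J.1)) /
      ENNReal.ofReal (len I)

/-- The `L^p_X = L^p([0,1]; X)` (Bochner) norm of `f = ∑_{I ∈ s} x_I h_I`. -/
def LpNormV (p : ℝ) (s : Finset DyadicI) (x : DyadicI → X) : ℝ :=
  (∫ t in Set.Icc (0 : ℝ) 1, ‖∑ I ∈ s, haar I t • x I‖ ^ p) ^ (1 / p)

/-- The operator norm `‖T_{τ,p} ⊗ Id_X : L^p_X → L^p_X‖ ∈ [0,∞]`, computed over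
finitely supported Haar expansions. -/
def lpOpNorm (τ : DyadicI → DyadicI) (p : ℝ) (X : Type*) [NormedAddCommGroup X]
    [NormedSpace ℝ X] : ℝ≥0∞ :=
  ⨆ (s : Finset DyadicI) (x : DyadicI → X) (_ : LpNormV p s x ≤ 1),
    ENNReal.ofReal (LpNormV p (s.image τ) (rearrCoef τ p s x))

/-- The operator norm `‖T_{τ,p}^{-1} ⊗ Id_X‖ ∈ [0,∞]` on the span of
`{h_J : J ∈ τ(D)}` with the `L^p_X` norm: the map determined by
`x h_{τ(I)}/|τ(I)|^{1/p} ↦ x h_I/|I|^{1/p}`, i.e. sending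
`g = ∑_{I ∈ L} x_I h_{τ(I)}` to `∑_{I ∈ L} (|τ(I)|/|I|)^{1/p} x_I h_I`. -/
def lpInvOpNorm (τ : DyadicI → DyadicI) (p : ℝ) (X : Type*) [NormedAddCommGroup X]
    [NormedSpace ℝ X] : ℝ≥0∞ :=
  ⨆ (L : Finset DyadicI) (x : DyadicI → X)
    (_ : LpNormV p (L.image τ) (fun J => ∑ I ∈ L, if τ I = J then x I else 0) ≤ 1),
    ENNReal.ofReal (LpNormV p L fun I => ((len (τ I) / len I) ^ (1 / p)) • x I)

/-- The operator norm `‖T_{τ,1}^{-1}‖₁ ∈ [0,∞]` on the span of `{h_J : J ∈ τ(D)}`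
with the dyadic `H¹` norm: the map determined by `h_{τ(I)}/|τ(I)| ↦ h_I/|I|`,
i.e. sending `g = ∑_{I ∈ L} a_I h_{τ(I)}` to `∑_{I ∈ L} (|τ(I)|/|I|) a_I h_I`. -/
def h1InvOpNorm (τ : DyadicI → DyadicI) : ℝ≥0∞ :=
  ⨆ (L : Finset DyadicI) (a : DyadicI → ℝ)
    (_ : HpNormS 1 (L.image τ) (fun J => ∑ I ∈ L, if τ I = J then a I else 0) ≤ 1),
    ENNReal.ofReal (HpNormS 1 L fun I => (len (τ I) / len I) * a I)

/-- The Rademacher average `(E_ε ‖∑_{i<n} ε_i a_i‖^p)^{1/p}` over all choices of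
signs `ε_i ∈ {±1}`. -/
def radAvg (p : ℝ) {Y : Type*} [NormedAddCommGroup Y] [NormedSpace ℝ Y] (n : ℕ)
    (a : Fin n → Y) : ℝ :=
  ((∑ ε : Fin n → Bool, ‖∑ i, (if ε i then (1 : ℝ) else -1) • a i‖ ^ p) / 2 ^ n) ^ (1 / p)

/-- The type-`p` constant `Type_p(Y) ∈ [0,∞]`: the least `C` such that
`(E_ε ‖∑ ε_i a_i‖^p)^{1/p} ≤ C (∑ ‖a_i‖^p)^{1/p}` for all finite families in `Y`. -/
def typeConst (p : ℝ) (Y : Type*) [NormedAddCommGroup Y] [NormedSpace ℝ Y] : ℝ≥0∞ :=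
  sInf {C : ℝ≥0∞ | ∀ (n : ℕ) (a : Fin n → Y),
    ENNReal.ofReal (radAvg p n a) ≤ C * ENNReal.ofReal ((∑ i, ‖a i‖ ^ p) ^ (1 / p))}

/-- The UMD property of a Banach space `E`: for each `1 < r < ∞` the Haar system is
unconditional in `L^r_E`. -/
def IsUMD (E : Type*) [NormedAddCommGroup E] [NormedSpace ℝ E] : Prop :=
  ∀ r : ℝ, 1 < r → ∃ β : ℝ, ∀ (s : Finset DyadicI) (x : DyadicI → E) (ε : DyadicI → ℝ),
    (∀ I, ε I = 1 ∨ ε I = -1) →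
    LpNormV r s (fun I => ε I • x I) ≤ β * LpNormV r s x

/-- `B` is a block in `L` with top `I`: `B ⊆ L`, `I` is the unique maximal interval
of `B`, and `B` is order-convex in `L` between its elements and `I`. -/
def IsBlock (L : Set DyadicI) (B : Set DyadicI) (I : DyadicI) : Prop :=
  B ⊆ L ∧ I ∈ B ∧ (∀ J ∈ B, toSet J ⊆ toSet I) ∧
    ∀ J ∈ B, ∀ K ∈ L, toSet J ⊆ toSet K → toSet K ⊆ toSet I → K ∈ B

/-- `G₁(K | E)`: the maximal dyadic intervals of `E` strictly contained in `K`. -/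
def gen1 (K : DyadicI) (E : Set DyadicI) : Set DyadicI :=
  {J | J ∈ E ∧ toSet J ⊂ toSet K ∧
    ∀ J' ∈ E, toSet J' ⊂ toSet K → toSet J ⊆ toSet J' → J' = J}

end Defs

/-!
Decompose `f = ∑ a_I h_I` by a stopping level: `I` belongs to level `k` when `k` is the largest
integer such that more than half of `I` lies in `Ω_k = {S f > 2^k}`. For the block `A_k` of level
`k`, the maximal intervals of `A_k` give `|A_k*| ≤ 2 |Ω_k|`, and since `S f ≤ 2^{k+1}` on at least
half of each `I ∈ A_k`, `∑_{A_k} a_I² |I| ≤ 2 · 4^{k+1} |A_k*|`. Pointwise,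
`S(T f_k)² ≤ μ_{τ(A_k)} · ∑_{A_k} (|I|/|τ(I)|) a_I² 1_{τ(I)}`, so Cauchy–Schwarz and the definition
of `C₁` give `‖S(T f_k)‖₁ ≤ (C₁ |A_k*| · ∑_{A_k} a_I² |I|)^{1/2} ≤ 4 (2 C₁)^{1/2} 2^k |Ω_k|`.
Finally `∑_k 2^k |Ω_k| ≤ 2 ‖S f‖₁`, hence `‖T f‖_{H¹} ≤ 8 (2 C₁)^{1/2} ‖f‖_{H¹}`.
-/

lemma ENNReal.rpow_inv_two_sq (x : ℝ≥0∞) : (x ^ (2⁻¹ : ℝ)) ^ 2 = x := by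
  simpa using ENNReal.rpow_inv_natCast_pow two_ne_zero x

lemma ENNReal.sq_rpow_inv_two (x : ℝ≥0∞) : (x ^ 2) ^ (2⁻¹ : ℝ) = x := by
  simpa using ENNReal.pow_rpow_inv_natCast two_ne_zero x

lemma ENNReal.rpow_finsetSum_le_sum_rpow {ι : Type*} (F : Finset ι) (f : ι → ℝ≥0∞) {p : ℝ}
    (hp0 : 0 < p) (hp1 : p ≤ 1) : (∑ i ∈ F, f i) ^ p ≤ ∑ i ∈ F, f i ^ p := by
  induction F using Finset.cons_induction with
  | empty => simp [ENNReal.zero_rpow_of_pos hp0]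
  | cons i F hi ih =>
    rw [Finset.sum_cons, Finset.sum_cons]
    exact (ENNReal.rpow_add_le_add_rpow _ _ hp0.le hp1).trans (by gcongr)

lemma lintegral_rpow_inv_two_mul_le {α : Type*} [MeasurableSpace α] (μ : Measure α)
    {f g : α → ℝ≥0∞} (hf : AEMeasurable f μ) (hg : AEMeasurable g μ) :
    ∫⁻ x, (f x * g x) ^ (2⁻¹ : ℝ) ∂μ ≤ ((∫⁻ x, f x ∂μ) * ∫⁻ x, g x ∂μ) ^ (2⁻¹ : ℝ) := by
  have h := ENNReal.lintegral_mul_le_Lp_mul_Lq μ Real.HolderConjugate.two_two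
    (hf.pow_const (2⁻¹ : ℝ)) (hg.pow_const (2⁻¹ : ℝ))
  simp only [Pi.mul_apply, one_div] at h
  simpa [ENNReal.mul_rpow_of_nonneg, ENNReal.rpow_inv_two_sq] using h

lemma measure_biUnion_le_of_nested {α : Type*} [MeasurableSpace α] (μ : Measure α)
    (S : Finset (Set α)) (hS : ∀ E ∈ S, MeasurableSet E)
    (hnest : ∀ E ∈ S, ∀ F ∈ S, (E ∩ F).Nonempty → E ⊆ F ∨ F ⊆ E)
    {W : Set α} (hW : MeasurableSet W) {c : ℝ≥0∞} (hc : ∀ E ∈ S, μ E ≤ c * μ (E ∩ W)) :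
    μ (⋃ E ∈ S, E) ≤ c * μ W := by
  set M := S.filter (Maximal (· ∈ S))
  have hcover : (⋃ E ∈ S, E) ⊆ ⋃ E ∈ M, E := by
    refine iUnion₂_subset fun E hE => ?_
    obtain ⟨F, hEF, hF⟩ := S.exists_le_maximal hE
    exact hEF.trans (subset_biUnion_of_mem (u := id) (Finset.mem_filter.mpr ⟨hF.prop, hF⟩))
  have hdisj : (M : Set (Set α)).PairwiseDisjoint fun E => E ∩ W := by
    intro E hE F hF hEF
    simp only [M, Finset.mem_coe, Finset.mem_filter] at hE hF
    refine Disjoint.mono inter_subset_left inter_subset_left (not_not.mp fun h => hEF ?_)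
    rcases hnest E hE.1 F hF.1 (not_disjoint_iff_nonempty_inter.mp h) with h | h
    · exact hE.2.eq_of_subset hF.1 h
    · exact (hF.2.eq_of_subset hE.1 h).symm
  calc μ (⋃ E ∈ S, E) ≤ μ (⋃ E ∈ M, E) := measure_mono hcover
    _ ≤ ∑ E ∈ M, μ E := measure_biUnion_finset_le M _
    _ ≤ ∑ E ∈ M, c * μ (E ∩ W) :=
        Finset.sum_le_sum fun E hE => hc E (Finset.mem_filter.mp hE).1
    _ = c * μ (⋃ E ∈ M, E ∩ W) := by
        rw [measure_biUnion_finset hdisj fun E hE => (hS E (Finset.mem_filter.mp hE).1).inter hW,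
          Finset.mul_sum]
    _ ≤ c * μ W := by gcongr; exact iUnion₂_subset fun _ _ => inter_subset_right

lemma sum_zpow_two_le_zpow_two (K : Finset ℤ) {b : ℤ} (hb : ∀ k ∈ K, k < b) :
    ∑ k ∈ K, (2 : ℝ) ^ k ≤ 2 ^ b := by
  induction K using Finset.induction_on_max generalizing b with
  | empty => simp only [Finset.sum_empty]; positivity
  | insert m K hlt ih =>
    have hmb : m < b := hb m (Finset.mem_insert_self m K)
    rw [Finset.sum_insert fun h => (hlt m h).false]
    calc (2 : ℝ) ^ m + ∑ k ∈ K, (2 : ℝ) ^ k ≤ 2 ^ m + 2 ^ m := by gcongr; exact ih hlt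
      _ = 2 ^ (m + 1) := by rw [zpow_add_one₀ two_ne_zero]; ring
      _ ≤ 2 ^ b := zpow_le_zpow_right₀ one_le_two hmb

lemma sum_zpow_two_le_two_mul (K : Finset ℤ) {v : ℝ} (hv : 0 ≤ v) (hK : ∀ k ∈ K, (2 : ℝ) ^ k < v) :
    ∑ k ∈ K, (2 : ℝ) ^ k ≤ 2 * v := by
  rcases K.eq_empty_or_nonempty with rfl | hne
  · simpa using hv
  · have hmax := hK _ (K.max'_mem hne)
    calc ∑ k ∈ K, (2 : ℝ) ^ k ≤ 2 ^ (K.max' hne + 1) :=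
          sum_zpow_two_le_zpow_two K fun k hk => Int.lt_add_one_of_le (K.le_max' k hk)
      _ ≤ 2 * v := by rw [zpow_add_one₀ two_ne_zero]; linarith

lemma sum_zpow_mul_measure_lt_le {α : Type*} [MeasurableSpace α] (μ : Measure α) {f : α → ℝ}
    (hf : Measurable f) (hf0 : 0 ≤ f) (K : Finset ℤ) :
    ∑ k ∈ K, ENNReal.ofReal (2 ^ k) * μ {x | 2 ^ k < f x} ≤ 2 * ∫⁻ x, ENNReal.ofReal (f x) ∂μ := by
  have hmeas : ∀ k : ℤ, MeasurableSet {x | (2 : ℝ) ^ k < f x} :=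
    fun k => measurableSet_lt measurable_const hf
  have hpt : ∀ x, ∑ k ∈ K, {x | (2 : ℝ) ^ k < f x}.indicator (fun _ => ENNReal.ofReal (2 ^ k)) x
      ≤ 2 * ENNReal.ofReal (f x) := by
    intro x
    simp only [indicator_apply, mem_ofPred_eq, ← Finset.sum_filter]
    rw [← ENNReal.ofReal_sum_of_nonneg fun k _ => by positivity, ← ENNReal.ofReal_ofNat 2,
      ← ENNReal.ofReal_mul zero_le_two]
    exact ENNReal.ofReal_le_ofReal
      (sum_zpow_two_le_two_mul _ (hf0 x) fun k hk => (Finset.mem_filter.mp hk).2)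
  calc ∑ k ∈ K, ENNReal.ofReal (2 ^ k) * μ {x | 2 ^ k < f x}
      = ∫⁻ x, ∑ k ∈ K, {x | (2 : ℝ) ^ k < f x}.indicator (fun _ => ENNReal.ofReal (2 ^ k)) x
          ∂μ := by
        rw [lintegral_finsetSum _ fun k _ => measurable_const.indicator (hmeas k)]
        exact Finset.sum_congr rfl fun k _ => (lintegral_indicator_const (hmeas k) _).symm
    _ ≤ ∫⁻ x, 2 * ENNReal.ofReal (f x) ∂μ := lintegral_mono hpt
    _ = _ := lintegral_const_mul _ hf.ennreal_ofReal

namespace DyadicI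

lemma len_pos (I : DyadicI) : 0 < I.len := zpow_pos two_pos _

lemma mem_toSet_iff {I : DyadicI} {t : ℝ} : t ∈ toSet I ↔ ⌊t * 2 ^ I.n⌋ = I.k := by
  have h : (0 : ℝ) < 2 ^ I.n := by positivity
  rw [Int.floor_eq_iff, toSet, lep, len, mem_Ico, zpow_neg, zpow_natCast, Int.cast_natCast,
    ← div_eq_mul_inv, inv_eq_one_div, ← add_div, div_le_iff₀ h, lt_div_iff₀ h]

lemma floor_mul_two_pow_of_le {m n : ℕ} (h : m ≤ n) (t : ℝ) :
    ⌊t * 2 ^ m⌋ = ⌊t * 2 ^ n⌋ / (2 ^ (n - m) : ℕ) := by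
  rw [← Int.floor_div_natCast, ← Nat.sub_add_cancel h, pow_add]
  push_cast
  rw [Nat.add_sub_cancel]
  field_simp

lemma toSet_subset_of_n_le {I J : DyadicI} (hn : I.n ≤ J.n) {t : ℝ} (htI : t ∈ toSet I)
    (htJ : t ∈ toSet J) : toSet J ⊆ toSet I := by
  intro x hx
  rw [mem_toSet_iff] at htI htJ hx ⊢
  rw [floor_mul_two_pow_of_le hn, hx, ← htJ, ← floor_mul_two_pow_of_le hn, htI]

lemma subset_or_subset_of_mem {I J : DyadicI} {t : ℝ} (htI : t ∈ toSet I) (htJ : t ∈ toSet J) :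
    toSet I ⊆ toSet J ∨ toSet J ⊆ toSet I :=
  (le_total J.n I.n).imp (fun h => toSet_subset_of_n_le h htJ htI)
    (fun h => toSet_subset_of_n_le h htI htJ)

lemma toSet_subset_Icc (I : DyadicI) : toSet I ⊆ Icc 0 1 := by
  intro t ht
  have hk : (I.k : ℝ) + 1 ≤ 2 ^ I.n := by exact_mod_cast I.hk
  rw [mem_toSet_iff, Int.floor_eq_iff, Int.cast_natCast] at ht
  have h : (0 : ℝ) < 2 ^ I.n := by positivity
  constructor
  · exact nonneg_of_mul_nonneg_left (I.k.cast_nonneg.trans ht.1) h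
  · exact (mul_le_iff_le_one_left h).mp (by linarith)

lemma measurableSet_toSet (I : DyadicI) : MeasurableSet (toSet I) := measurableSet_Ico

lemma volume_toSet (I : DyadicI) : volume (toSet I) = ENNReal.ofReal I.len := by
  rw [toSet, Real.volume_Ico, add_sub_cancel_left]

instance : Countable DyadicI :=
  Function.Injective.countable (f := fun I : DyadicI => (I.n, I.k)) fun I J h => by
    cases I; cases J; simp_all

end DyadicI

local notation "ν" => volume.restrict (Icc (0 : ℝ) 1)

lemma restrict_Icc_toSet (I : DyadicI) : ν (toSet I) = ENNReal.ofReal I.len :=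
  (Measure.restrict_eq_self _ (toSet_subset_Icc I)).trans (volume_toSet I)

section SquareFunction

variable (s : Finset DyadicI) (a : DyadicI → ℝ)

lemma sqFnS_nonneg (t : ℝ) : 0 ≤ sqFnS s a t := Real.sqrt_nonneg _

lemma measurable_sqFnS : Measurable (sqFnS s a) :=
  (Finset.measurable_sum _ fun I _ =>
    (measurable_const.indicator (measurableSet_toSet I)).const_mul _).sqrt

lemma sqFnS_le_sqrt_sum_sq (t : ℝ) : sqFnS s a t ≤ √(∑ I ∈ s, a I ^ 2) := by
  refine Real.sqrt_le_sqrt (Finset.sum_le_sum fun I _ => ?_)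
  exact mul_le_of_le_one_right (sq_nonneg _) (indicator_le_self' (fun _ _ => zero_le_one) t)

lemma abs_le_sqFnS {I : DyadicI} (hI : I ∈ s) {t : ℝ} (ht : t ∈ toSet I) :
    |a I| ≤ sqFnS s a t := by
  rw [← Real.sqrt_sq_eq_abs]
  refine Real.sqrt_le_sqrt ?_
  have := Finset.single_le_sum (f := fun J => a J ^ 2 * (toSet J).indicator (fun _ => (1 : ℝ)) t)
    (fun J _ => mul_nonneg (sq_nonneg _) (indicator_nonneg (fun _ _ => zero_le_one) t)) hI
  simpa [indicator_of_mem ht] using this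

lemma ofReal_sqFnS_sq (t : ℝ) :
    ENNReal.ofReal (sqFnS s a t ^ 2)
      = ∑ I ∈ s, ENNReal.ofReal (a I ^ 2) * (toSet I).indicator 1 t := by
  have hnn : ∀ I ∈ s, 0 ≤ a I ^ 2 * (toSet I).indicator (fun _ => (1 : ℝ)) t :=
    fun I _ => mul_nonneg (sq_nonneg _) (indicator_nonneg (fun _ _ => zero_le_one) t)
  rw [sqFnS, Real.sq_sqrt (Finset.sum_nonneg hnn), ENNReal.ofReal_sum_of_nonneg hnn]
  refine Finset.sum_congr rfl fun I _ => ?_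
  rw [ENNReal.ofReal_mul (sq_nonneg _)]
  by_cases ht : t ∈ toSet I <;> simp [ht]

lemma sqFnS_filter_ne_zero : sqFnS (s.filter (a · ≠ 0)) a = sqFnS s a := by
  funext t
  refine congrArg Real.sqrt (Finset.sum_filter_of_ne fun _ _ h ha => h ?_)
  rw [ha, zero_pow two_ne_zero, zero_mul]

lemma ofReal_HpNormS_one :
    ENNReal.ofReal (HpNormS 1 s a) = ∫⁻ t in Icc 0 1, ENNReal.ofReal (sqFnS s a t) := by
  have hint : Integrable (sqFnS s a) ν := by
    refine Integrable.of_bound (measurable_sqFnS s a).aestronglyMeasurable (√(∑ I ∈ s, a I ^ 2))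
      (ae_of_all _ fun t => ?_)
    exact (Real.norm_of_nonneg (sqFnS_nonneg s a t)).trans_le (sqFnS_le_sqrt_sum_sq s a t)
  simp only [HpNormS, Real.rpow_one, div_one]
  exact ofReal_integral_eq_lintegral_ofReal hint (ae_of_all _ (sqFnS_nonneg s a))

end SquareFunction

section Rearrangement

variable (τ : DyadicI → DyadicI)

def rearrSq (s : Finset DyadicI) (a : DyadicI → ℝ) (t : ℝ) : ℝ≥0∞ :=
  ∑ I ∈ s, ENNReal.ofReal ((I.len / (τ I).len * a I) ^ 2) * (toSet (τ I)).indicator 1 t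

lemma measurable_rearrSq (s : Finset DyadicI) (a : DyadicI → ℝ) : Measurable (rearrSq τ s a) :=
  Finset.measurable_sum _ fun I _ =>
    (measurable_const.indicator (measurableSet_toSet (τ I))).const_mul _

lemma rearrSq_filter_ne_zero (s : Finset DyadicI) (a : DyadicI → ℝ) :
    rearrSq τ (s.filter (a · ≠ 0)) a = rearrSq τ s a := by
  funext t
  refine Finset.sum_filter_of_ne fun _ _ h ha => h ?_
  simp [ha]

end Rearrangement

lemma ofReal_sqFnS_rearrCoefS {τ : DyadicI → DyadicI} (hτ : Function.Injective τ)
    (s : Finset DyadicI) (a : DyadicI → ℝ) (t : ℝ) :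
    ENNReal.ofReal (sqFnS (s.image τ) (rearrCoefS τ 1 s a) t) = rearrSq τ s a t ^ (2⁻¹ : ℝ) := by
  have hcoef : ∀ I ∈ s, rearrCoefS τ 1 s a (τ I) = I.len / (τ I).len * a I := by
    intro I hI
    rw [rearrCoefS, Finset.sum_eq_single_of_mem I hI fun J _ hJ => if_neg (hτ.ne hJ)]
    simp
  rw [← ENNReal.sq_rpow_inv_two (ENNReal.ofReal _), ← ENNReal.ofReal_pow (sqFnS_nonneg _ _ t),
    ofReal_sqFnS_sq, Finset.sum_image fun _ _ _ _ h => hτ h, rearrSq]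
  exact congrArg (· ^ (2⁻¹ : ℝ)) (Finset.sum_congr rfl fun I hI => by rw [hcoef I hI])

lemma measurable_muSet (τ : DyadicI → DyadicI) (L : Set DyadicI) : Measurable (muSet τ L) :=
  Measurable.iSup fun I => Measurable.iSup fun _ =>
    (measurable_const.mul (measurable_const.indicator (measurableSet_toSet (τ I)))).ennreal_ofReal

lemma ofReal_len_div_le_muSet (τ : DyadicI → DyadicI) {L : Set DyadicI} {I : DyadicI} (hI : I ∈ L)
    {t : ℝ} (ht : t ∈ toSet (τ I)) : ENNReal.ofReal (I.len / (τ I).len) ≤ muSet τ L t :=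
  le_iSup₂_of_le (f := fun (I : DyadicI) (_ : I ∈ L) => ENNReal.ofReal
    (I.len / (τ I).len * (toSet (τ I)).indicator (fun _ => (1 : ℝ)) t)) I hI (by simp [ht])

lemma lintegral_muSet_le_Cone (τ : DyadicI → DyadicI) {L : Set DyadicI} (hL : L.Nonempty) :
    ∫⁻ t in Icc 0 1, muSet τ L t ≤ Cone τ * ν (pointSet L) := by
  obtain ⟨I, hI⟩ := hL
  have hsub : pointSet L ⊆ Icc 0 1 := iUnion₂_subset fun J _ => toSet_subset_Icc J
  have hpos : volume (pointSet L) ≠ 0 := by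
    refine (lt_of_lt_of_le ?_ (measure_mono (subset_biUnion_of_mem hI))).ne'
    rw [volume_toSet]
    exact ENNReal.ofReal_pos.mpr I.len_pos
  have hfin : volume (pointSet L) ≠ ⊤ := ((measure_mono hsub).trans_lt measure_Icc_lt_top).ne
  rw [Measure.restrict_eq_self _ hsub, ← ENNReal.div_le_iff hpos hfin]
  exact le_iSup₂ (f := fun (L : Set DyadicI) (_ : L.Nonempty) =>
    (∫⁻ t in Icc (0 : ℝ) 1, muSet τ L t) / volume (pointSet L)) L ⟨I, hI⟩

lemma lintegral_rearrSq_le_muSet (τ : DyadicI → DyadicI) (A : Finset DyadicI) (a : DyadicI → ℝ) :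
    ∫⁻ t in Icc 0 1, rearrSq τ A a t ^ (2⁻¹ : ℝ)
      ≤ ((∫⁻ t in Icc 0 1, muSet τ A t) * ∑ I ∈ A, ENNReal.ofReal (a I ^ 2 * I.len))
          ^ (2⁻¹ : ℝ) := by
  set R : ℝ → ℝ≥0∞ := fun t =>
    ∑ I ∈ A, ENNReal.ofReal (I.len / (τ I).len * a I ^ 2) * (toSet (τ I)).indicator 1 t
  have hratio : ∀ I : DyadicI, 0 ≤ I.len / (τ I).len :=
    fun I => (div_pos I.len_pos (τ I).len_pos).le
  have hpt : ∀ t, rearrSq τ A a t ≤ muSet τ A t * R t := by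
    intro t
    rw [rearrSq, Finset.mul_sum]
    refine Finset.sum_le_sum fun I hI => ?_
    by_cases ht : t ∈ toSet (τ I)
    · rw [indicator_of_mem ht, Pi.one_apply, mul_one, mul_one]
      calc ENNReal.ofReal ((I.len / (τ I).len * a I) ^ 2)
          = ENNReal.ofReal (I.len / (τ I).len) * ENNReal.ofReal (I.len / (τ I).len * a I ^ 2) := by
            rw [← ENNReal.ofReal_mul (hratio I)]
            ring_nf
        _ ≤ _ := by gcongr; exact ofReal_len_div_le_muSet τ (Finset.mem_coe.mpr hI) ht
    · simp [ht]
  have hR : ∫⁻ t in Icc 0 1, R t = ∑ I ∈ A, ENNReal.ofReal (a I ^ 2 * I.len) := by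
    rw [lintegral_finsetSum _ fun I _ =>
      (measurable_one.indicator (measurableSet_toSet (τ I))).const_mul _]
    refine Finset.sum_congr rfl fun I _ => ?_
    rw [lintegral_const_mul _ (measurable_one.indicator (measurableSet_toSet (τ I))),
      lintegral_indicator_one (measurableSet_toSet (τ I)), restrict_Icc_toSet,
      ← ENNReal.ofReal_mul (mul_nonneg (hratio I) (sq_nonneg _))]
    congr 1
    field_simp [(τ I).len_pos.ne']
  calc _ ≤ ∫⁻ t in Icc 0 1, (muSet τ A t * R t) ^ (2⁻¹ : ℝ) :=
        lintegral_mono fun t => ENNReal.rpow_le_rpow (hpt t) (by norm_num)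
    _ ≤ _ := lintegral_rpow_inv_two_mul_le _ (measurable_muSet τ A).aemeasurable
        (Finset.measurable_sum _ fun I _ =>
          (measurable_one.indicator (measurableSet_toSet (τ I))).const_mul _).aemeasurable
    _ = _ := by rw [hR]

section StoppingLevel

variable (s : Finset DyadicI) (a : DyadicI → ℝ)

def superlevel (r : ℝ) : Set ℝ := {t | r < sqFnS s a t}

def IsHeavy (r : ℝ) (I : DyadicI) : Prop :=
  ENNReal.ofReal I.len < 2 * ν (toSet I ∩ superlevel s a r)

lemma measurableSet_superlevel (r : ℝ) : MeasurableSet (superlevel s a r) :=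
  measurableSet_lt measurable_const (measurable_sqFnS s a)

variable {s a}

lemma isHeavy_of_lt_abs {I : DyadicI} (hI : I ∈ s) {r : ℝ} (hr : r < |a I|) :
    IsHeavy s a r I := by
  have hsub : toSet I ⊆ superlevel s a r := fun t ht => hr.trans_le (abs_le_sqFnS s a hI ht)
  have hpos : (0 : ℝ≥0∞) < ENNReal.ofReal I.len := ENNReal.ofReal_pos.mpr I.len_pos
  rw [IsHeavy, inter_eq_left.mpr hsub, restrict_Icc_toSet, two_mul]
  exact ENNReal.lt_add_right ENNReal.ofReal_ne_top hpos.ne'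

lemma not_isHeavy_of_sqrt_le {r : ℝ} (hr : √(∑ J ∈ s, a J ^ 2) ≤ r) (I : DyadicI) :
    ¬ IsHeavy s a r I := by
  have hempty : superlevel s a r = ∅ :=
    eq_empty_of_forall_notMem fun t ht => (sqFnS_le_sqrt_sum_sq s a t).not_gt (hr.trans_lt ht)
  simp [IsHeavy, hempty]

lemma exists_greatest_isHeavy {I : DyadicI} (hI : I ∈ s) (ha : a I ≠ 0) :
    ∃ k : ℤ, IsHeavy s a (2 ^ k) I ∧ ∀ j : ℤ, IsHeavy s a (2 ^ j) I → j ≤ k := by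
  obtain ⟨m, hm⟩ := pow_unbounded_of_one_lt (√(∑ J ∈ s, a J ^ 2)) one_lt_two
  obtain ⟨n, hn⟩ := exists_pow_lt_of_lt_one (abs_pos.mpr ha) one_half_lt_one
  have hbdd : ∀ j : ℤ, IsHeavy s a (2 ^ j) I → j ≤ m := fun j hj => by
    by_contra! hmj
    refine not_isHeavy_of_sqrt_le (hm.le.trans ?_) I hj
    rw [← zpow_natCast]
    exact zpow_le_zpow_right₀ one_le_two hmj.le
  have hheavy : IsHeavy s a (2 ^ (-n : ℤ)) I :=
    isHeavy_of_lt_abs hI (by rwa [zpow_neg, zpow_natCast, ← inv_pow, ← one_div])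
  exact Int.exists_greatest_of_bdd ⟨m, hbdd⟩ ⟨_, hheavy⟩

end StoppingLevel

lemma pointSet_coe_eq_biUnion_image (A : Finset DyadicI) : pointSet A = ⋃ E ∈ A.image toSet, E := by
  rw [pointSet, Finset.set_biUnion_finset_image, Finset.set_biUnion_coe]

lemma restrict_Icc_pointSet_le_of_isHeavy {s : Finset DyadicI} {a : DyadicI → ℝ}
    {A : Finset DyadicI} {r : ℝ} (hA : ∀ I ∈ A, IsHeavy s a r I) :
    ν (pointSet A) ≤ 2 * ν (superlevel s a r) := by
  rw [pointSet_coe_eq_biUnion_image]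
  refine measure_biUnion_le_of_nested ν _ ?_ ?_ (measurableSet_superlevel s a r) ?_ <;>
    simp only [Finset.forall_mem_image]
  · exact fun I _ => measurableSet_toSet I
  · exact fun I _ J _ ⟨t, htI, htJ⟩ => subset_or_subset_of_mem htI htJ
  · exact fun I hI => by rw [restrict_Icc_toSet]; exact (hA I hI).le

lemma ofReal_len_le_of_not_isHeavy {s : Finset DyadicI} {a : DyadicI → ℝ} {r : ℝ} {I : DyadicI}
    (hI : ¬ IsHeavy s a r I) : ENNReal.ofReal I.len ≤ 2 * ν (toSet I \ superlevel s a r) := by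
  rw [IsHeavy, not_lt] at hI
  have hsplit := measure_inter_add_sdiff (μ := ν) (toSet I) (measurableSet_superlevel s a r)
  rw [restrict_Icc_toSet] at hsplit
  have hfin : ν (toSet I ∩ superlevel s a r) ≠ ⊤ := measure_ne_top _ _
  have hle : ν (toSet I ∩ superlevel s a r) ≤ ν (toSet I \ superlevel s a r) := by
    rwa [← hsplit, two_mul, ENNReal.add_le_add_iff_left hfin] at hI
  calc ENNReal.ofReal I.len = _ := hsplit.symm
    _ ≤ _ := by gcongr
    _ = _ := (two_mul _).symm

lemma sum_sq_mul_len_le {s : Finset DyadicI} {a : DyadicI → ℝ} {A : Finset DyadicI} (hA : A ⊆ s)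
    {r : ℝ} (hr : 0 ≤ r) (hlight : ∀ I ∈ A, ¬ IsHeavy s a r I) :
    ∑ I ∈ A, ENNReal.ofReal (a I ^ 2 * I.len) ≤ 2 * ENNReal.ofReal r ^ 2 * ν (pointSet A) := by
  set W := superlevel s a r
  have hpt : ∀ t, ∑ I ∈ A, ENNReal.ofReal (a I ^ 2) * (toSet I \ W).indicator 1 t
      ≤ (pointSet A).indicator (fun _ => ENNReal.ofReal r ^ 2) t := by
    intro t
    by_cases ht : t ∈ pointSet A \ W
    · rw [indicator_of_mem ht.1, ← ENNReal.ofReal_pow hr]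
      calc _ ≤ ∑ I ∈ s, ENNReal.ofReal (a I ^ 2) * (toSet I).indicator 1 t :=
            (Finset.sum_le_sum fun I _ => mul_le_mul_right (indicator_le_indicator_of_subset
              sdiff_subset (fun _ => zero_le) t) _).trans (Finset.sum_le_sum_of_subset hA)
        _ = ENNReal.ofReal (sqFnS s a t ^ 2) := (ofReal_sqFnS_sq s a t).symm
        _ ≤ _ := ENNReal.ofReal_le_ofReal
            (pow_le_pow_left₀ (sqFnS_nonneg s a t) (not_lt.mp ht.2) 2)
    · refine (Finset.sum_eq_zero fun I hI => ?_).trans_le zero_le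
      rw [indicator_of_notMem fun h => ht ⟨mem_biUnion hI h.1, h.2⟩, mul_zero]
  have hmeas : MeasurableSet (pointSet A) :=
    MeasurableSet.biUnion A.countable_toSet fun I _ => measurableSet_toSet I
  calc ∑ I ∈ A, ENNReal.ofReal (a I ^ 2 * I.len)
      ≤ ∑ I ∈ A, ENNReal.ofReal (a I ^ 2) * (2 * ν (toSet I \ W)) :=
        Finset.sum_le_sum fun I hI => by
          rw [ENNReal.ofReal_mul (sq_nonneg _)]
          gcongr
          exact ofReal_len_le_of_not_isHeavy (hlight I hI)
    _ = 2 * ∫⁻ t, ∑ I ∈ A, ENNReal.ofReal (a I ^ 2) * (toSet I \ W).indicator 1 t ∂ν := by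
        have hmeasI : ∀ I, MeasurableSet (toSet I \ W) :=
          fun I => (measurableSet_toSet I).diff (measurableSet_superlevel s a r)
        rw [lintegral_finsetSum _ fun I _ => (measurable_one.indicator (hmeasI I)).const_mul _,
          Finset.mul_sum]
        refine Finset.sum_congr rfl fun I _ => ?_
        rw [lintegral_const_mul _ (measurable_one.indicator (hmeasI I)),
          lintegral_indicator_one (hmeasI I)]
        ring
    _ ≤ 2 * ∫⁻ t, (pointSet A).indicator (fun _ => ENNReal.ofReal r ^ 2) t ∂ν := by
        gcongr with t; exact hpt t
    _ = 2 * ENNReal.ofReal r ^ 2 * ν (pointSet A) := by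
        rw [lintegral_indicator_const hmeas, mul_assoc]

lemma lintegral_rearrSq_block_le (τ : DyadicI → DyadicI) {s : Finset DyadicI}
    {a : DyadicI → ℝ} {A : Finset DyadicI} (hA : A ⊆ s) (hne : A.Nonempty) {k : ℤ}
    (hheavy : ∀ I ∈ A, IsHeavy s a (2 ^ k) I) (hlight : ∀ I ∈ A, ¬ IsHeavy s a (2 ^ (k + 1)) I) :
    ∫⁻ t in Icc 0 1, rearrSq τ A a t ^ (2⁻¹ : ℝ)
      ≤ 4 * (2 * Cone τ) ^ (2⁻¹ : ℝ) * (ENNReal.ofReal (2 ^ k) * ν (superlevel s a (2 ^ k))) := by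
  have hx : ENNReal.ofReal ((2 : ℝ) ^ (k + 1)) = 2 * ENNReal.ofReal (2 ^ k) := by
    rw [zpow_add_one₀ two_ne_zero, mul_comm, ENNReal.ofReal_mul zero_le_two, ENNReal.ofReal_ofNat]
  set V := ν (pointSet A)
  set x := ENNReal.ofReal ((2 : ℝ) ^ (k + 1))
  calc _ ≤ ((∫⁻ t in Icc 0 1, muSet τ A t) * ∑ I ∈ A, ENNReal.ofReal (a I ^ 2 * I.len))
          ^ (2⁻¹ : ℝ) := lintegral_rearrSq_le_muSet τ A a
    _ ≤ ((Cone τ * V) * (2 * x ^ 2 * V)) ^ (2⁻¹ : ℝ) := by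
        gcongr
        · exact lintegral_muSet_le_Cone τ (Finset.coe_nonempty.mpr hne)
        · exact sum_sq_mul_len_le hA (by positivity) hlight
    _ = (2 * Cone τ) ^ (2⁻¹ : ℝ) * (x * V) := by
        rw [show Cone τ * V * (2 * x ^ 2 * V) = 2 * Cone τ * (x * V) ^ 2 by ring,
          ENNReal.mul_rpow_of_nonneg _ _ (by norm_num), ENNReal.sq_rpow_inv_two]
    _ ≤ (2 * Cone τ) ^ (2⁻¹ : ℝ) * (x * (2 * ν (superlevel s a (2 ^ k)))) := by
        gcongr
        exact restrict_Icc_pointSet_le_of_isHeavy hheavy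
    _ = _ := by rw [hx]; ring

lemma lintegral_rearrSq_le_of_ne_zero (τ : DyadicI → DyadicI) {s : Finset DyadicI}
    {a : DyadicI → ℝ} (ha : ∀ I ∈ s, a I ≠ 0) :
    ∫⁻ t in Icc 0 1, rearrSq τ s a t ^ (2⁻¹ : ℝ)
      ≤ 8 * (2 * Cone τ) ^ (2⁻¹ : ℝ) * ∫⁻ t in Icc 0 1, ENNReal.ofReal (sqFnS s a t) := by
  choose! g hg using fun I (hI : I ∈ s) => exists_greatest_isHeavy hI (ha I hI)
  set K := s.image g
  set A : ℤ → Finset DyadicI := fun k => s.filter (g · = k)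
  set c := (2 * Cone τ) ^ (2⁻¹ : ℝ)
  have hblock : ∀ k ∈ K, ∫⁻ t in Icc 0 1, rearrSq τ (A k) a t ^ (2⁻¹ : ℝ)
      ≤ 4 * c * (ENNReal.ofReal (2 ^ k) * ν (superlevel s a (2 ^ k))) := by
    intro k hk
    obtain ⟨I, hI, hIk⟩ := Finset.mem_image.mp hk
    refine lintegral_rearrSq_block_le τ (Finset.filter_subset _ s)
      ⟨I, Finset.mem_filter.mpr ⟨hI, hIk⟩⟩ (fun J hJ => ?_) (fun J hJ hheavy => ?_)
    · obtain ⟨hJs, hJg⟩ := Finset.mem_filter.mp hJ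
      exact hJg ▸ (hg J hJs).1
    · obtain ⟨hJs, hJg⟩ := Finset.mem_filter.mp hJ
      have := (hg J hJs).2 _ hheavy
      omega
  have hsplit : ∀ t, rearrSq τ s a t = ∑ k ∈ K, rearrSq τ (A k) a t := fun t =>
    (Finset.sum_fiberwise_of_maps_to (fun I hI => Finset.mem_image_of_mem g hI) _).symm
  calc ∫⁻ t in Icc 0 1, rearrSq τ s a t ^ (2⁻¹ : ℝ)
      ≤ ∫⁻ t in Icc 0 1, ∑ k ∈ K, rearrSq τ (A k) a t ^ (2⁻¹ : ℝ) := by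
        simp_rw [hsplit]
        exact lintegral_mono fun t =>
          ENNReal.rpow_finsetSum_le_sum_rpow _ _ (by norm_num) (by norm_num)
    _ = ∑ k ∈ K, ∫⁻ t in Icc 0 1, rearrSq τ (A k) a t ^ (2⁻¹ : ℝ) :=
        lintegral_finsetSum _ fun k _ => (measurable_rearrSq τ _ a).pow_const _
    _ ≤ ∑ k ∈ K, 4 * c * (ENNReal.ofReal (2 ^ k) * ν {t | 2 ^ k < sqFnS s a t}) :=
        Finset.sum_le_sum hblock
    _ ≤ 4 * c * (2 * ∫⁻ t in Icc 0 1, ENNReal.ofReal (sqFnS s a t)) := by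
        rw [← Finset.mul_sum]
        gcongr
        exact sum_zpow_mul_measure_lt_le ν (measurable_sqFnS s a) (sqFnS_nonneg s a) K
    _ = _ := by ring

lemma ofReal_HpNormS_rearrCoefS_le {τ : DyadicI → DyadicI} (hτ : Function.Injective τ)
    (s : Finset DyadicI) (a : DyadicI → ℝ) :
    ENNReal.ofReal (HpNormS 1 (s.image τ) (rearrCoefS τ 1 s a))
      ≤ 8 * (2 * Cone τ) ^ (2⁻¹ : ℝ) * ENNReal.ofReal (HpNormS 1 s a) := by
  simp_rw [ofReal_HpNormS_one, ofReal_sqFnS_rearrCoefS hτ]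
  rw [← rearrSq_filter_ne_zero τ s a, ← sqFnS_filter_ne_zero s a]
  exact lintegral_rearrSq_le_of_ne_zero τ fun I hI => (Finset.mem_filter.mp hI).2

lemma hpOpNormS_one_le {τ : DyadicI → DyadicI} (hτ : Function.Injective τ) :
    hpOpNormS τ 1 ≤ 8 * (2 * Cone τ) ^ (2⁻¹ : ℝ) :=
  iSup_le fun s => iSup_le fun a => iSup_le fun h => (ofReal_HpNormS_rearrCoefS_le hτ s a).trans
    (mul_le_of_le_one_right' (ENNReal.ofReal_le_one.mpr h))

/-- There is an absolute constant `A₁ > 0` such that for every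
injective `τ : D → D`, the scalar rearrangement operator on dyadic `H¹` satisfies
`‖T_{τ,1}‖₁² ≤ A₁ · C₁`. -/
theorem statement5 :
    ∃ A₁ : ℝ, 0 < A₁ ∧
      ∀ (τ : DyadicI → DyadicI), Function.Injective τ →
        hpOpNormS τ 1 ^ 2 ≤ ENNReal.ofReal A₁ * Cone τ := by
  refine ⟨128, by norm_num, fun τ hτ => ?_⟩
  calc hpOpNormS τ 1 ^ 2 ≤ (8 * (2 * Cone τ) ^ (2⁻¹ : ℝ)) ^ 2 := by
        gcongr
        exact hpOpNormS_one_le hτ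
    _ = ENNReal.ofReal 128 * Cone τ := by
        rw [mul_pow, ENNReal.rpow_inv_two_sq, ENNReal.ofReal_ofNat]
        ring
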